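/- There does not exist a GBTD(k, 2) for any integer k ≥ 2. -/

import Mathlib

/-! Let `f x` count the blocks of the first row containing the point `x`. Since `x` meets each of
the `2k - 1` columns once and each row at most `k` times, `f x ∈ {k - 1, k}`. For `x ≠ y`, let `a`
and `d` count the blocks of the first and second row containing both points: then `a + d = k - 1`,
and inclusion–exclusion over the columns gives `f x + f y + d = (2k - 1) + a`, so
`f x + f y ≡ k (mod 2)`. With at least three points this makes all `f x` of equal parity, hence
`f` is constant, and counting the incidences of the first row gives `2k · f x = (2k - 1) k`, which
is impossible by parity. -/

/-- A GBTD(k, m): a `(km, k, k−1)`-BIBD whose `m(km−1)` blocks are arranged into an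
`m × (km−1)` array such that every point occurs exactly once in each column and in at
most `k` cells of each row. The array is given as `A : Fin m → Fin (k*m-1) → Finset (Fin (k*m))`. -/
structure IsGBTD (k m : ℕ) (A : Fin m → Fin (k * m - 1) → Finset (Fin (k * m))) : Prop where
  block_size : ∀ i j, (A i j).card = k
  pair_balanced : ∀ x y : Fin (k * m), x ≠ y →
    (Finset.univ.filter
      (fun ij : Fin m × Fin (k * m - 1) => x ∈ A ij.1 ij.2 ∧ y ∈ A ij.1 ij.2)).card = k - 1
  col_once : ∀ (x : Fin (k * m)) (j : Fin (k * m - 1)),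
    (Finset.univ.filter (fun i : Fin m => x ∈ A i j)).card = 1
  row_le : ∀ (x : Fin (k * m)) (i : Fin m),
    (Finset.univ.filter (fun j : Fin (k * m - 1) => x ∈ A i j)).card ≤ k

/-- The number of blocks of row `i` of the array containing the point `x`. -/
def rowCount (k m : ℕ) (A : Fin m → Fin (k * m - 1) → Finset (Fin (k * m)))
    (x : Fin (k * m)) (i : Fin m) : ℕ :=
  (Finset.univ.filter (fun j : Fin (k * m - 1) => x ∈ A i j)).card

open Finset

theorem Finset.card_filter_add_card_filter_add_card_filter_not_or {α : Type*} [DecidableEq α]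
    (s : Finset α) (p q : α → Prop) [DecidablePred p] [DecidablePred q] :
    #(s.filter p) + #(s.filter q) + #(s.filter fun a => ¬(p a ∨ q a)) =
      #s + #(s.filter fun a => p a ∧ q a) := by
  rw [← card_union_add_card_inter, ← filter_or, ← filter_and, add_right_comm,
    card_filter_add_card_filter_not]

theorem mod_two_eq_of_forall_ne_add_mod_two_eq {α : Type*} [Fintype α]
    (hα : 3 ≤ Fintype.card α) {f : α → ℕ} {r : ℕ}
    (h : ∀ x y, x ≠ y → (f x + f y) % 2 = r) (x y : α) : f x % 2 = f y % 2 := by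
  classical
  obtain rfl | hxy := eq_or_ne x y
  · rfl
  obtain ⟨z, -, hz⟩ := exists_mem_notMem_of_card_lt_card
    (s := {x, y}) (t := univ) (by rw [card_univ]; exact card_le_two.trans_lt hα)
  simp only [mem_insert, mem_singleton, not_or] at hz
  have hxz := h x z (Ne.symm hz.1)
  have hyz := h y z (Ne.symm hz.2)
  omega

namespace IsGBTD

section

variable {k m : ℕ} {A : Fin m → Fin (k * m - 1) → Finset (Fin (k * m))}

theorem rowCount_le (hA : IsGBTD k m A) (x : Fin (k * m)) (i : Fin m) :
    rowCount k m A x i ≤ k :=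
  hA.row_le x i

theorem sum_rowCount (hA : IsGBTD k m A) (i : Fin m) :
    ∑ x, rowCount k m A x i = (k * m - 1) * k := by
  simp only [rowCount, card_filter]
  rw [sum_comm]
  simp only [← card_filter, filter_univ_mem, hA.block_size, sum_const, card_univ,
    Fintype.card_fin, smul_eq_mul]

end

section

variable {k : ℕ} {A : Fin 2 → Fin (k * 2 - 1) → Finset (Fin (k * 2))}

theorem mem_one_iff (hA : IsGBTD k 2 A) (x : Fin (k * 2)) (j : Fin (k * 2 - 1)) :
    x ∈ A 1 j ↔ x ∉ A 0 j := by
  have h := hA.col_once x j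
  rw [card_filter, Fin.sum_univ_two] at h
  by_cases h0 : x ∈ A 0 j <;> by_cases h1 : x ∈ A 1 j <;> simp_all

theorem rowCount_zero_add_rowCount_one (hA : IsGBTD k 2 A) (x : Fin (k * 2)) :
    rowCount k 2 A x 0 + rowCount k 2 A x 1 = k * 2 - 1 := by
  simp only [rowCount, hA.mem_one_iff]
  rw [card_filter_add_card_filter_not, card_univ, Fintype.card_fin]

theorem rowCount_zero_eq_or (hA : IsGBTD k 2 A) (x : Fin (k * 2)) :
    rowCount k 2 A x 0 = k - 1 ∨ rowCount k 2 A x 0 = k := by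
  have hsum := hA.rowCount_zero_add_rowCount_one x
  have hle₀ := hA.rowCount_le x 0
  have hle₁ := hA.rowCount_le x 1
  omega

theorem rowCount_add_rowCount_mod_two (hA : IsGBTD k 2 A) {x y : Fin (k * 2)} (hxy : x ≠ y) :
    (rowCount k 2 A x 0 + rowCount k 2 A y 0) % 2 = k % 2 := by
  have hpair := hA.pair_balanced x y hxy
  rw [card_filter, Fintype.sum_prod_type, Fin.sum_univ_two] at hpair
  simp only [← card_filter, hA.mem_one_iff, ← not_or] at hpair
  have hincl := card_filter_add_card_filter_add_card_filter_not_or univ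
    (fun j => x ∈ A 0 j) (fun j => y ∈ A 0 j)
  rw [card_univ, Fintype.card_fin] at hincl
  have hk := x.pos
  unfold rowCount
  omega

end

end IsGBTD

/-- There does not exist a GBTD(k, 2) for any integer `k ≥ 2`. -/
theorem stmt_8 (k : ℕ) (hk : 2 ≤ k) :
    ¬ ∃ A : Fin 2 → Fin (k * 2 - 1) → Finset (Fin (k * 2)), IsGBTD k 2 A := by
  rintro ⟨A, hA⟩
  set f : Fin (k * 2) → ℕ := fun x => rowCount k 2 A x 0
  have hf : ∀ x, f x = k - 1 ∨ f x = k := hA.rowCount_zero_eq_or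
  have hparity : ∀ x y, f x % 2 = f y % 2 :=
    mod_two_eq_of_forall_ne_add_mod_two_eq (by rw [Fintype.card_fin]; omega)
      fun x y hxy => hA.rowCount_add_rowCount_mod_two hxy
  let x₀ : Fin (k * 2) := ⟨0, by omega⟩
  have hconst : ∀ x, f x = f x₀ := fun x => by
    have := hparity x x₀
    rcases hf x with h | h <;> rcases hf x₀ with h₀ | h₀ <;> omega
  have hsum := hA.sum_rowCount 0
  rw [sum_congr rfl fun x _ => hconst x, sum_const, card_univ, Fintype.card_fin,
    smul_eq_mul] at hsum
  have hdouble : 2 * f x₀ = k * 2 - 1 :=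
    Nat.eq_of_mul_eq_mul_left (by omega : 0 < k) (by rw [mul_comm k (k * 2 - 1), ← hsum]; ring)
  omega
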